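/- arXiv:1905.10177 — 7 statements merged into one kernel-verified Lean document; each statement's English description precedes it below -/
import Mathlib

section
/- Suppose Ψ₂ is an index function such that (1/α)(T_α(x†) − T_α(x_α)) ≤ Ψ₂(α) for all α > 0, where x_α is a minimizer of T_α for each α > 0. Then J(x†) − J(x_α) ≤ 2 Ψ₂(2α) for all α > 0 (Theorem 1, implication (b) ⇒ (a), with the converted index function). -/
/-!
Doubling the regularization parameter converts the gap in the Tikhonov functional into a gap in
the penalty. Minimality of `x_α` for `T_α` gives `F x_α - F x† ≤ α (J x† - J x_α)` for the fidelity
term `F`, hence `α (J x† - J x_α) ≤ T_{2α} x† - T_{2α} x_α ≤ T_{2α} x† - T_{2α} x_{2α} ≤ 2α Ψ₂(2α)`.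
-/

def IsIndexFun (Ψ : ℝ → ℝ) : Prop :=
  MonotoneOn Ψ (Set.Ioi 0) ∧ (∀ t > 0, 0 ≤ Ψ t) ∧
    Filter.Tendsto Ψ (nhdsWithin 0 (Set.Ioi 0)) (nhds 0)

section Tikhonov

variable {X : Type*} (F J : X → ℝ) (T : ℝ → X → ℝ)

theorem mul_penalty_gap_le_tikhonov_gap_two_mul (hT : ∀ α x, T α x = F x + α * J x) {α : ℝ}
    {x₀ x : X} (hx : T α x ≤ T α x₀) :
    α * (J x₀ - J x) ≤ T (2 * α) x₀ - T (2 * α) x := by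
  simp only [hT] at hx ⊢
  linarith

theorem penalty_gap_le_of_tikhonov_gap_le (hT : ∀ α x, T α x = F x + α * J x) (x₀ : X)
    (xa : ℝ → X) (hmin : ∀ α > 0, ∀ x, T α (xa α) ≤ T α x) (Ψ : ℝ → ℝ)
    (hrate : ∀ α > 0, (1 / α) * (T α x₀ - T α (xa α)) ≤ Ψ α) :
    ∀ α > 0, J x₀ - J (xa α) ≤ 2 * Ψ (2 * α) := by
  intro α hα
  have h2α : 0 < 2 * α := by positivity
  have hrate₂ := hrate (2 * α) h2α
  rw [one_div, inv_mul_le_iff₀ h2α] at hrate₂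
  refine le_of_mul_le_mul_left ?_ hα
  calc α * (J x₀ - J (xa α))
      ≤ T (2 * α) x₀ - T (2 * α) (xa α) :=
        mul_penalty_gap_le_tikhonov_gap_two_mul F J T hT (hmin α hα x₀)
    _ ≤ T (2 * α) x₀ - T (2 * α) (xa (2 * α)) := by linarith [hmin (2 * α) h2α (xa α)]
    _ ≤ 2 * α * Ψ (2 * α) := hrate₂
    _ = α * (2 * Ψ (2 * α)) := by ring

end Tikhonov

theorem stmt1_general {X H : Type*} [NormedAddCommGroup X] [NormedSpace ℝ X]
    [NormedAddCommGroup H] [InnerProductSpace ℝ H]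
    (A : X →L[ℝ] H) (J : X → ℝ) (xdag : X)
    (T : ℝ → X → ℝ)
    (hT : ∀ α x, T α x = (1 / 2) * ‖A x - A xdag‖ ^ 2 + α * J x)
    (xa : ℝ → X) (hmin : ∀ α > 0, ∀ x, T α (xa α) ≤ T α x)
    (Ψ₂ : ℝ → ℝ)
    (hrate : ∀ α > 0, (1 / α) * (T α xdag - T α (xa α)) ≤ Ψ₂ α) :
    ∀ α > 0, J xdag - J (xa α) ≤ 2 * Ψ₂ (2 * α) :=
  penalty_gap_le_of_tikhonov_gap_le _ J T hT xdag xa hmin Ψ₂ hrate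

/-- Theorem 1, (b) ⇒ (a): a `T`-rate `Ψ₂` yields the `J`-rate `α ↦ 2 Ψ₂(2α)`. -/
theorem stmt1 {X H : Type*} [NormedAddCommGroup X] [NormedSpace ℝ X] [CompleteSpace X]
    [NormedAddCommGroup H] [InnerProductSpace ℝ H] [CompleteSpace H]
    (A : X →L[ℝ] H) (J : X → ℝ) (hJ : ConvexOn ℝ Set.univ J) (xdag : X)
    (T : ℝ → X → ℝ)
    (hT : ∀ α x, T α x = (1 / 2) * ‖A x - A xdag‖ ^ 2 + α * J x)
    (xa : ℝ → X) (hmin : ∀ α > 0, ∀ x, T α (xa α) ≤ T α x)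
    (Ψ₂ : ℝ → ℝ) (hΨ₂ : IsIndexFun Ψ₂)
    (hrate : ∀ α > 0, (1 / α) * (T α xdag - T α (xa α)) ≤ Ψ₂ α) :
    ∀ α > 0, J xdag - J (xa α) ≤ 2 * Ψ₂ (2 * α) :=
  stmt1_general A J xdag T hT xa hmin Ψ₂ hrate
end

section
/- Suppose Ψ₂ is an index function such that (1/α)(T_α(x†) − T_α(x_α)) ≤ Ψ₂(α) for all α > 0, where x_α is a minimizer of T_α for each α > 0. Then the variational inequality holds: for every x ∈ X and every t > 0, J(x†) − J(x) ≤ Ψ₂(t) + ‖A x − A x†‖²/(2t); in particular J(x†) − J(x) ≤ inf_{t>0} (Ψ₂(t) + ‖A x − A x†‖²/(2t)) (Theorem 1, implication (b) ⇒ (c)). -/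
theorem sub_le_add_div_of_excess_le {X : Type*} {f J : X → ℝ} {α ψ : ℝ} (hα : 0 < α)
    {xα x₀ : X} (hmin : ∀ x, f xα + α * J xα ≤ f x + α * J x)
    (hexcess : (1 / α) * (f x₀ + α * J x₀ - (f xα + α * J xα)) ≤ ψ) (x : X) :
    J x₀ - J x ≤ ψ + (f x - f x₀) / α := by
  rw [one_div_mul_eq_div, div_le_iff₀ hα] at hexcess
  rw [← sub_le_iff_le_add', le_div_iff₀ hα]
  linarith [hmin x]

theorem stmt2_general {X H : Type*} [NormedAddCommGroup X] [NormedSpace ℝ X]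
    [NormedAddCommGroup H] [InnerProductSpace ℝ H]
    (A : X →L[ℝ] H) (J : X → ℝ) (xdag : X)
    (T : ℝ → X → ℝ)
    (hT : ∀ α x, T α x = (1 / 2) * ‖A x - A xdag‖ ^ 2 + α * J x)
    (xa : ℝ → X) (hmin : ∀ α > 0, ∀ x, T α (xa α) ≤ T α x)
    (Ψ₂ : ℝ → ℝ)
    (hrate : ∀ α > 0, (1 / α) * (T α xdag - T α (xa α)) ≤ Ψ₂ α) :
    (∀ x : X, ∀ t > 0, J xdag - J x ≤ Ψ₂ t + ‖A x - A xdag‖ ^ 2 / (2 * t)) ∧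
      (∀ x : X, J xdag - J x ≤
        ⨅ t : Set.Ioi (0 : ℝ), (Ψ₂ t + ‖A x - A xdag‖ ^ 2 / (2 * (t : ℝ)))) := by
  have variational : ∀ x : X, ∀ t > 0, J xdag - J x ≤ Ψ₂ t + ‖A x - A xdag‖ ^ 2 / (2 * t) := by
    intro x t ht
    have h := sub_le_add_div_of_excess_le (f := fun x => 1 / 2 * ‖A x - A xdag‖ ^ 2) ht
      (by simpa only [hT] using hmin t ht) (by simpa only [hT] using hrate t ht) x
    convert h using 2
    simp only [sub_self, norm_zero]
    ring
  exact ⟨variational, fun x => le_ciInf fun t => variational x t t.2⟩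

/-- Theorem 1, (b) ⇒ (c): a `T`-rate `Ψ₂` yields the variational inequality
`J(x†) − J(x) ≤ Ψ₂(t) + ‖Ax − Ax†‖²/(2t)` for all `t > 0`, hence with the infimum
over `t > 0` on the right-hand side. -/
theorem stmt2 {X H : Type*} [NormedAddCommGroup X] [NormedSpace ℝ X] [CompleteSpace X]
    [NormedAddCommGroup H] [InnerProductSpace ℝ H] [CompleteSpace H]
    (A : X →L[ℝ] H) (J : X → ℝ) (hJ : ConvexOn ℝ Set.univ J) (xdag : X)
    (T : ℝ → X → ℝ)
    (hT : ∀ α x, T α x = (1 / 2) * ‖A x - A xdag‖ ^ 2 + α * J x)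
    (xa : ℝ → X) (hmin : ∀ α > 0, ∀ x, T α (xa α) ≤ T α x)
    (Ψ₂ : ℝ → ℝ) (hΨ₂ : IsIndexFun Ψ₂)
    (hrate : ∀ α > 0, (1 / α) * (T α xdag - T α (xa α)) ≤ Ψ₂ α) :
    (∀ x : X, ∀ t > 0, J xdag - J x ≤ Ψ₂ t + ‖A x - A xdag‖ ^ 2 / (2 * t)) ∧
      (∀ x : X, J xdag - J x ≤
        ⨅ t : Set.Ioi (0 : ℝ), (Ψ₂ t + ‖A x - A xdag‖ ^ 2 / (2 * (t : ℝ)))) :=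
  stmt2_general A J xdag T hT xa hmin Ψ₂ hrate
end

section
/- Suppose Φ₃ : [0,∞) → [0,∞) satisfies the variational inequality J(x†) − J(x) ≤ Φ₃(‖A x − A x†‖) for all x ∈ X. Then for every α > 0 and every minimizer x_α of T_α, (1/α)(T_α(x†) − T_α(x_α)) ≤ Φ₃(‖A x_α − A x†‖) − ‖A x_α − A x†‖²/(2α); in particular, (1/α)(T_α(x†) − T_α(x_α)) ≤ sup_{t ≥ 0} (Φ₃(t) − t²/(2α)) whenever this supremum is finite (Theorem 1, implication (c) ⇒ (b)). -/
/-! With `y = A x†` the data term of `T_α(x†)` vanishes, so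
`(1/α)(T_α(x†) − T_α(x)) = J(x†) − J(x) − ‖Ax − Ax†‖²/(2α)` for every `x`, and the variational
inequality bounds `J(x†) − J(x)` by `Φ₃(‖Ax − Ax†‖)`. The supremum bound is the value at
`t = ‖Ax_α − Ax†‖`. -/

section Tikhonov

variable {X H : Type*} [SeminormedAddGroup H]

noncomputable def tikhonov (A : X → H) (y : H) (J : X → ℝ) (α : ℝ) (x : X) : ℝ :=
  (1 / 2) * ‖A x - y‖ ^ 2 + α * J x

variable (A : X → H) (J : X → ℝ) (xdag : X)

theorem tikhonov_self (α : ℝ) : tikhonov A (A xdag) J α xdag = α * J xdag := by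
  simp [tikhonov]

theorem one_div_mul_tikhonov_sub {α : ℝ} (hα : α ≠ 0) (x : X) :
    (1 / α) * (tikhonov A (A xdag) J α xdag - tikhonov A (A xdag) J α x) =
      J xdag - J x - ‖A x - A xdag‖ ^ 2 / (2 * α) := by
  rw [tikhonov_self, tikhonov]
  field_simp
  ring

theorem one_div_mul_tikhonov_sub_le {Φ : ℝ → ℝ} (hvar : ∀ x, J xdag - J x ≤ Φ ‖A x - A xdag‖)
    {α : ℝ} (hα : α ≠ 0) (x : X) :
    (1 / α) * (tikhonov A (A xdag) J α xdag - tikhonov A (A xdag) J α x) ≤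
      Φ ‖A x - A xdag‖ - ‖A x - A xdag‖ ^ 2 / (2 * α) := by
  rw [one_div_mul_tikhonov_sub A J xdag hα]
  linarith [hvar x]

end Tikhonov

theorem stmt3_general {X H : Type*} [NormedAddCommGroup X] [NormedSpace ℝ X]
    [NormedAddCommGroup H] [InnerProductSpace ℝ H]
    (A : X →L[ℝ] H) (J : X → ℝ) (xdag : X)
    (T : ℝ → X → ℝ)
    (hT : ∀ α x, T α x = (1 / 2) * ‖A x - A xdag‖ ^ 2 + α * J x)
    (Φ₃ : ℝ → ℝ)
    (hvar : ∀ x : X, J xdag - J x ≤ Φ₃ ‖A x - A xdag‖) :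
    ∀ α > 0, ∀ xa : X, (∀ x, T α xa ≤ T α x) →
      ((1 / α) * (T α xdag - T α xa) ≤
          Φ₃ ‖A xa - A xdag‖ - ‖A xa - A xdag‖ ^ 2 / (2 * α)) ∧
        (BddAbove ((fun t => Φ₃ t - t ^ 2 / (2 * α)) '' Set.Ici 0) →
          (1 / α) * (T α xdag - T α xa) ≤
            sSup ((fun t => Φ₃ t - t ^ 2 / (2 * α)) '' Set.Ici 0)) := by
  intro α hα xa _
  obtain rfl : T = tikhonov A (A xdag) J := funext₂ hT
  have hrate := one_div_mul_tikhonov_sub_le A J xdag hvar hα.ne' xa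
  exact ⟨hrate, fun hbdd => hrate.trans (le_csSup hbdd ⟨_, norm_nonneg _, rfl⟩)⟩

/-- Theorem 1, (c) ⇒ (b): the variational inequality with `Φ₃` yields the `T`-rate
`(1/α)(T_α(x†) − T_α(x_α)) ≤ Φ₃(‖Ax_α − Ax†‖) − ‖Ax_α − Ax†‖²/(2α)`, and in particular
the bound by `sup_{t ≥ 0} (Φ₃(t) − t²/(2α))` whenever that supremum is finite. -/
theorem stmt3 {X H : Type*} [NormedAddCommGroup X] [NormedSpace ℝ X] [CompleteSpace X]
    [NormedAddCommGroup H] [InnerProductSpace ℝ H] [CompleteSpace H]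
    (A : X →L[ℝ] H) (J : X → ℝ) (hJ : ConvexOn ℝ Set.univ J) (xdag : X)
    (T : ℝ → X → ℝ)
    (hT : ∀ α x, T α x = (1 / 2) * ‖A x - A xdag‖ ^ 2 + α * J x)
    (Φ₃ : ℝ → ℝ) (hΦnn : ∀ t ≥ 0, 0 ≤ Φ₃ t)
    (hvar : ∀ x : X, J xdag - J x ≤ Φ₃ ‖A x - A xdag‖) :
    ∀ α > 0, ∀ xa : X, (∀ x, T α xa ≤ T α x) →
      ((1 / α) * (T α xdag - T α xa) ≤
          Φ₃ ‖A xa - A xdag‖ - ‖A xa - A xdag‖ ^ 2 / (2 * α)) ∧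
        (BddAbove ((fun t => Φ₃ t - t ^ 2 / (2 * α)) '' Set.Ici 0) →
          (1 / α) * (T α xdag - T α xa) ≤
            sSup ((fun t => Φ₃ t - t ^ 2 / (2 * α)) '' Set.Ici 0)) :=
  stmt3_general A J xdag T hT Φ₃ hvar
end

section
/- The T-rate implies a KL inequality (Theorem 4, (b) ⇒ (a)): let Ψ be an index function such that T_α(x†) − T_α(x_α) ≤ α Ψ(α) for all α > 0, and assume the function Θ̄(t) := Ψ(1/t)/t is a strictly decreasing continuous bijection of (0,∞) onto (0,∞) with inverse g := Θ̄⁻¹. Then g is strictly decreasing (hence nonincreasing), and for every α > 0 with T_α(x†) − T_α(x_α) > 0 one has g(T_α(x†) − T_α(x_α)) · α ≥ 1; in particular, with s := inf{‖q‖_{X*} : q ∈ ∂J(x†)}, g(T_α(x†) − T_α(x_α)) · α s ≥ s, which is the KL inequality with desingularizing slope g and constant k = 1/s. -/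
/-- The subdifferential of `F : X → ℝ` at `x`:
`∂F(x) = {p ∈ X* : F(z) ≥ F(x) + p(z − x) for all z}`. -/
def SubDiff {X : Type*} [NormedAddCommGroup X] [NormedSpace ℝ X] (F : X → ℝ) (x : X) :
    Set (X →L[ℝ] ℝ) :=
  {p | ∀ z, F x + p (z - x) ≤ F z}

namespace StrictAntiOn

variable {α β : Type*} [LinearOrder α] [Preorder β] {f : α → β} {g : β → α} {s : Set α}
  {t : Set β}

theorem strictAntiOn_of_rightInvOn (hf : StrictAntiOn f s) (hg : Set.MapsTo g t s)
    (hfg : Set.RightInvOn g f t) : StrictAntiOn g t := fun u hu v hv huv =>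
  (hf.lt_iff_gt (hg hu) (hg hv)).1 (by rwa [hfg hu, hfg hv])

theorem le_of_le_rightInvOn (hf : StrictAntiOn f s) (hg : Set.MapsTo g t s)
    (hfg : Set.RightInvOn g f t) {u : β} {a : α} (hu : u ∈ t) (ha : a ∈ s) (hua : u ≤ f a) :
    a ≤ g u :=
  (hf.le_iff_ge (hg hu) ha).1 (by rwa [hfg hu])

end StrictAntiOn

theorem stmt9_general {X : Type*} [NormedAddCommGroup X] [NormedSpace ℝ X]
    (J : X → ℝ) (xdag : X)
    (T : ℝ → X → ℝ)
    (xa : ℝ → X)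
    (Ψ : ℝ → ℝ)
    (hrate : ∀ α > 0, T α xdag - T α (xa α) ≤ α * Ψ α)
    (Θbar : ℝ → ℝ) (hΘbar : ∀ t > 0, Θbar t = Ψ (1 / t) / t)
    (hΘanti : StrictAntiOn Θbar (Set.Ioi 0))
    (g : ℝ → ℝ) (hgpos : ∀ u > 0, 0 < g u)
    (hg_right : ∀ u > 0, Θbar (g u) = u)
    (s : ℝ) (hs : s = sInf (norm '' SubDiff J xdag)) :
    StrictAntiOn g (Set.Ioi 0) ∧
      ∀ α > 0, 0 < T α xdag - T α (xa α) →
        g (T α xdag - T α (xa α)) * α ≥ 1 ∧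
          g (T α xdag - T α (xa α)) * α * s ≥ s := by
  have hgmaps : Set.MapsTo g (Set.Ioi 0) (Set.Ioi 0) := hgpos
  have hginv : Set.RightInvOn g Θbar (Set.Ioi 0) := hg_right
  refine ⟨hΘanti.strictAntiOn_of_rightInvOn hgmaps hginv, fun α hα hgap => ?_⟩
  have hΘα : Θbar (1 / α) = α * Ψ α := by
    rw [hΘbar _ (one_div_pos.2 hα), one_div_one_div]
    field_simp
  have hg_ge : 1 / α ≤ g (T α xdag - T α (xa α)) :=
    hΘanti.le_of_le_rightInvOn hgmaps hginv hgap (one_div_pos.2 hα) (hΘα ▸ hrate α hα)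
  have hgα : 1 ≤ g (T α xdag - T α (xa α)) * α := by rwa [div_le_iff₀ hα] at hg_ge
  have hs_nonneg : 0 ≤ s := by
    rw [hs]
    exact Real.sInf_nonneg (by rintro _ ⟨q, -, rfl⟩; exact norm_nonneg q)
  exact ⟨hgα, le_mul_of_one_le_left hs_nonneg hgα⟩

/-- Theorem 4, (b) ⇒ (a): the `T`-rate `T_α(x†) − T_α(x_α) ≤ α Ψ(α)` implies a KL
inequality. Assume `Θ̄(t) = Ψ(1/t)/t` is a strictly decreasing continuous bijection of
`(0,∞)` onto itself with inverse `g`. Then `g` is strictly decreasing on `(0,∞)` and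
`g(T_α(x†) − T_α(x_α)) · α ≥ 1` whenever `T_α(x†) − T_α(x_α) > 0`; in particular, with
`s = inf{‖q‖ : q ∈ ∂J(x†)}`, one gets `g(T_α(x†) − T_α(x_α)) · α s ≥ s`, the KL
inequality with slope `g` and constant `k = 1/s`. -/
theorem stmt9 {X H : Type*} [NormedAddCommGroup X] [NormedSpace ℝ X] [CompleteSpace X]
    [NormedAddCommGroup H] [InnerProductSpace ℝ H] [CompleteSpace H]
    (A : X →L[ℝ] H) (J : X → ℝ) (hJ : ConvexOn ℝ Set.univ J) (xdag : X)
    (T : ℝ → X → ℝ)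
    (hT : ∀ α x, T α x = (1 / 2) * ‖A x - A xdag‖ ^ 2 + α * J x)
    (xa : ℝ → X) (hmin : ∀ α > 0, ∀ x, T α (xa α) ≤ T α x)
    (Ψ : ℝ → ℝ) (hΨ : IsIndexFun Ψ)
    (hrate : ∀ α > 0, T α xdag - T α (xa α) ≤ α * Ψ α)
    (Θbar : ℝ → ℝ) (hΘbar : ∀ t > 0, Θbar t = Ψ (1 / t) / t)
    (hΘanti : StrictAntiOn Θbar (Set.Ioi 0))
    (hΘcont : ContinuousOn Θbar (Set.Ioi 0))
    (hΘpos : ∀ t > 0, 0 < Θbar t)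
    (g : ℝ → ℝ) (hgpos : ∀ u > 0, 0 < g u)
    (hg_right : ∀ u > 0, Θbar (g u) = u)
    (hg_left : ∀ t > 0, g (Θbar t) = t)
    (s : ℝ) (hs : s = sInf (norm '' SubDiff J xdag)) :
    StrictAntiOn g (Set.Ioi 0) ∧
      ∀ α > 0, 0 < T α xdag - T α (xa α) →
        g (T α xdag - T α (xa α)) * α ≥ 1 ∧
          g (T α xdag - T α (xa α)) * α * s ≥ s :=
  stmt9_general J xdag T xa Ψ hrate Θbar hΘbar hΘanti g hgpos hg_right s hs
end

section
/- Bregman rate under the variational inequality (Theorem 2, part 1): suppose Φ : [0,∞) → [0,∞) is a concave index function with J(x†) − J(x) ≤ Φ(‖A x − A x†‖) for all x ∈ X, and let Ψ(α) := sup_{t ≥ 0} (Φ(t) − t²/(2α)), assumed finite for each α > 0. Then the element ξ_α^δ := −(1/α) A*(A x_α^δ − y^δ) belongs to ∂J(x_α^δ), and there exists a constant C > 0 (independent of α and δ) such that for all α > 0 and δ > 0, the Bregman distance B_{ξ_α^δ}(x_α^δ, x†) := J(x†) − J(x_α^δ) − ξ_α^δ(x† − x_α^δ) satisfies B_{ξ_α^δ}(x_α^δ,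 x†) ≤ C (δ²/α + Ψ(α)). -/
/-!
The subgradient claim is the first-order optimality condition of the Tikhonov functional: along
the segment from `x_α^δ` to any `z`, convexity of `J` bounds the difference quotients of the
quadratic term from below by `-α (J z - J x_α^δ)`.

For the rate, write `u = A x_α^δ - y^δ` and `e = A x† - y^δ`. The variational inequality and the
definition of `Ψ` give `J x† - J x_α^δ ≤ Ψ α + ‖u - e‖² / (2α)`, while `-ξ_α^δ (x† - x_α^δ) =
⟪u, e - u⟫ / α`. The three-point identity `⟪u, e - u⟫ + ‖u - e‖² / 2 = (‖e‖² - ‖u‖²) / 2`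
cancels the quadratic term, so the Bregman distance is at most `Ψ α + δ² / (2α)`, and `C = 1`.
-/

open Set Filter RealInnerProductSpace

section

variable {X : Type*} [NormedAddCommGroup X] [NormedSpace ℝ X]

theorem ConvexOn.le_add_smul_sub {f : X → ℝ} (hf : ConvexOn ℝ univ f) (x z : X) {t : ℝ}
    (ht₀ : 0 ≤ t) (ht₁ : t ≤ 1) : f (x + t • (z - x)) ≤ f x + t * (f z - f x) := by
  have h := hf.2 (mem_univ x) (mem_univ z) (sub_nonneg.2 ht₁) ht₀ (by ring)
  rw [show (1 - t) • x + t • z = x + t • (z - x) by module, smul_eq_mul, smul_eq_mul] at h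
  linarith

theorem neg_smul_mem_subDiff_of_forall_add_mul_le {g f : X → ℝ} {D : X →L[ℝ] ℝ} {x : X}
    {α : ℝ} (hf : ConvexOn ℝ univ f) (hg : HasFDerivAt g D x) (hα : 0 < α)
    (hmin : ∀ z, g x + α * f x ≤ g z + α * f z) : (-(1 / α)) • D ∈ SubDiff f x := by
  intro z
  have hslope : ∀ t ∈ Ioc (0 : ℝ) 1,
      -(α * (f z - f x)) ≤ t⁻¹ • (g (x + t • (z - x)) - g x) := by
    rintro t ⟨ht₀, ht₁⟩
    have hconv := hf.le_add_smul_sub x z ht₀.le ht₁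
    have hdecr : -(t * (α * (f z - f x))) ≤ g (x + t • (z - x)) - g x := by
      nlinarith [hmin (x + t • (z - x))]
    rw [smul_eq_mul, le_inv_mul_iff₀ ht₀]
    linarith
  have hD : -(α * (f z - f x)) ≤ D (z - x) :=
    ge_of_tendsto (hg.hasLineDerivAt (z - x)).tendsto_slope_zero_right
      (eventually_of_mem (Ioc_mem_nhdsGT one_pos) hslope)
  have hquot : -(D (z - x)) / α ≤ f z - f x := by
    rw [div_le_iff₀ hα]; linarith
  simp only [smul_apply, smul_eq_mul]
  linarith [hquot, show -(1 / α) * D (z - x) = -(D (z - x)) / α by ring]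

end

section

variable {X H : Type*} [NormedAddCommGroup X] [NormedSpace ℝ X]
  [NormedAddCommGroup H] [InnerProductSpace ℝ H]

theorem hasFDerivAt_half_norm_sub_sq (A : X →L[ℝ] H) (y : H) (x : X) :
    HasFDerivAt (fun x => (1 / 2) * ‖A x - y‖ ^ 2) ((innerSL ℝ (A x - y)).comp A) x := by
  refine (((A.hasFDerivAt.sub_const y).norm_sq).const_mul (1 / 2)).congr_fderiv ?_
  ext v
  simp

theorem inner_sub_add_half_norm_sub_sq (u e : H) :
    ⟪u, e - u⟫ + ‖u - e‖ ^ 2 / 2 = (‖e‖ ^ 2 - ‖u‖ ^ 2) / 2 := by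
  rw [inner_sub_right, real_inner_self_eq_norm_sq, norm_sub_sq_real]
  ring

theorem bregman_le_of_le_add_sq_div {J : X → ℝ} (A : X →L[ℝ] H) {xdag xad : X} {yδ : H}
    {α δ Ψα : ℝ} (hα : 0 < α) (hyδ : ‖A xdag - yδ‖ ≤ δ)
    (hJ : J xdag - J xad ≤ Ψα + ‖A xad - A xdag‖ ^ 2 / (2 * α)) :
    J xdag - J xad - ((-(1 / α)) • (innerSL ℝ (A xad - yδ)).comp A) (xdag - xad) ≤
      δ ^ 2 / (2 * α) + Ψα := by
  set u := A xad - yδ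
  set e := A xdag - yδ
  have hAe : A xad - A xdag = u - e := by simp only [u, e]; abel
  have hAu : A (xdag - xad) = e - u := by simp only [u, e, map_sub]; abel
  have he : ‖e‖ ^ 2 ≤ δ ^ 2 := pow_le_pow_left₀ (norm_nonneg e) hyδ 2
  simp only [smul_apply, ContinuousLinearMap.comp_apply, innerSL_apply_apply, hAu,
    smul_eq_mul]
  rw [hAe] at hJ
  calc J xdag - J xad - -(1 / α) * ⟪u, e - u⟫
      ≤ Ψα + (⟪u, e - u⟫ + ‖u - e‖ ^ 2 / 2) / α := by
        rw [show ‖u - e‖ ^ 2 / (2 * α) = ‖u - e‖ ^ 2 / 2 / α by ring] at hJ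
        rw [add_div]; linarith [show -(1 / α) * ⟪u, e - u⟫ = -(⟪u, e - u⟫ / α) by ring]
    _ = Ψα + (‖e‖ ^ 2 - ‖u‖ ^ 2) / (2 * α) := by
        rw [inner_sub_add_half_norm_sub_sq]; ring
    _ ≤ δ ^ 2 / (2 * α) + Ψα := by
        have : (‖e‖ ^ 2 - ‖u‖ ^ 2) / (2 * α) ≤ δ ^ 2 / (2 * α) := by
          gcongr; nlinarith [sq_nonneg ‖u‖]
        linarith

end

theorem stmt11_general {X H : Type*} [NormedAddCommGroup X] [NormedSpace ℝ X]
    [NormedAddCommGroup H] [InnerProductSpace ℝ H]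
    (A : X →L[ℝ] H) (J : X → ℝ) (hJ : ConvexOn ℝ Set.univ J) (xdag : X)
    (Astar : H → X →L[ℝ] ℝ) (hAstar : ∀ v x, Astar v x = (inner ℝ v (A x) : ℝ))
    (Φ : ℝ → ℝ)
    (hvar : ∀ x : X, J xdag - J x ≤ Φ ‖A x - A xdag‖)
    (Ψ : ℝ → ℝ)
    (hbdd : ∀ α > 0, BddAbove ((fun t => Φ t - t ^ 2 / (2 * α)) '' Set.Ici 0))
    (hΨ : ∀ α > 0, Ψ α = sSup ((fun t => Φ t - t ^ 2 / (2 * α)) '' Set.Ici 0)) :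
    ∃ C > 0, ∀ α > 0, ∀ δ > 0, ∀ yδ : H, ‖A xdag - yδ‖ ≤ δ →
      ∀ xad : X,
        (∀ x, (1 / 2) * ‖A xad - yδ‖ ^ 2 + α * J xad ≤
          (1 / 2) * ‖A x - yδ‖ ^ 2 + α * J x) →
        ((-(1 / α)) • Astar (A xad - yδ)) ∈ SubDiff J xad ∧
          J xdag - J xad - ((-(1 / α)) • Astar (A xad - yδ)) (xdag - xad) ≤
            C * (δ ^ 2 / α + Ψ α) := by
  refine ⟨1, one_pos, fun α hα δ _ yδ hyδ xad hmin => ?_⟩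
  have hΦΨ : ∀ t ≥ 0, Φ t ≤ Ψ α + t ^ 2 / (2 * α) := fun t ht => by
    have := hΨ α hα ▸ le_csSup (hbdd α hα) ⟨t, ht, rfl⟩
    linarith
  have hAstar_eq : Astar (A xad - yδ) = (innerSL ℝ (A xad - yδ)).comp A :=
    ContinuousLinearMap.ext fun x => by
      simp only [hAstar, ContinuousLinearMap.comp_apply, innerSL_apply_apply]
  rw [hAstar_eq]
  refine ⟨neg_smul_mem_subDiff_of_forall_add_mul_le hJ
    (hasFDerivAt_half_norm_sub_sq A yδ xad) hα hmin, ?_⟩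
  calc _ ≤ δ ^ 2 / (2 * α) + Ψ α :=
        bregman_le_of_le_add_sq_div A hα hyδ ((hvar xad).trans (hΦΨ _ (norm_nonneg _)))
    _ ≤ 1 * (δ ^ 2 / α + Ψ α) := by
        have : δ ^ 2 / (2 * α) ≤ δ ^ 2 / α := by gcongr; linarith
        linarith

/-- Theorem 2, part 1 (Bregman rate): under the variational inequality with a concave
index function `Φ` and with `Ψ(α) = sup_{t ≥ 0} (Φ(t) − t²/(2α))` (assumed finite), the
element `ξ_α^δ = −(1/α) A*(A x_α^δ − y^δ)` is a subgradient of `J` at the minimizer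
`x_α^δ` of the noisy Tikhonov functional, and there is a constant `C > 0` with
`B_{ξ_α^δ}(x_α^δ, x†) ≤ C (δ²/α + Ψ(α))` for all `α, δ > 0`. -/
theorem stmt11 {X H : Type*} [NormedAddCommGroup X] [NormedSpace ℝ X] [CompleteSpace X]
    [NormedAddCommGroup H] [InnerProductSpace ℝ H] [CompleteSpace H]
    (A : X →L[ℝ] H) (J : X → ℝ) (hJ : ConvexOn ℝ Set.univ J) (xdag : X)
    (Astar : H → X →L[ℝ] ℝ) (hAstar : ∀ v x, Astar v x = (inner ℝ v (A x) : ℝ))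
    (Φ : ℝ → ℝ) (hΦconc : ConcaveOn ℝ (Set.Ici 0) Φ)
    (hΦmono : MonotoneOn Φ (Set.Ici 0)) (hΦnn : ∀ t ≥ 0, 0 ≤ Φ t) (hΦ0 : Φ 0 = 0)
    (hΦcont0 : ContinuousWithinAt Φ (Set.Ici 0) 0)
    (hvar : ∀ x : X, J xdag - J x ≤ Φ ‖A x - A xdag‖)
    (Ψ : ℝ → ℝ)
    (hbdd : ∀ α > 0, BddAbove ((fun t => Φ t - t ^ 2 / (2 * α)) '' Set.Ici 0))
    (hΨ : ∀ α > 0, Ψ α = sSup ((fun t => Φ t - t ^ 2 / (2 * α)) '' Set.Ici 0)) :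
    ∃ C > 0, ∀ α > 0, ∀ δ > 0, ∀ yδ : H, ‖A xdag - yδ‖ ≤ δ →
      ∀ xad : X,
        (∀ x, (1 / 2) * ‖A xad - yδ‖ ^ 2 + α * J xad ≤
          (1 / 2) * ‖A x - yδ‖ ^ 2 + α * J x) →
        ((-(1 / α)) • Astar (A xad - yδ)) ∈ SubDiff J xad ∧
          J xdag - J xad - ((-(1 / α)) • Astar (A xad - yδ)) (xdag - xad) ≤
            C * (δ ^ 2 / α + Ψ α) :=
  stmt11_general A J hJ xdag Astar hAstar Φ hvar Ψ hbdd hΨ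
end

section
/- Strict metric rate under the variational inequality (Theorem 2, part 2): suppose Φ : [0,∞) → [0,∞) is a concave index function with J(x†) − J(x) ≤ Φ(‖A x − A x†‖) for all x ∈ X, and let Ψ(α) := sup_{t ≥ 0} (Φ(t) − t²/(2α)), assumed finite for each α > 0. Then there exists a constant C > 0 (independent of α and δ) such that for all α > 0 and δ > 0: |J(x†) − J(x_α^δ)| ≤ C (Ψ(α) + δ²/α) and ‖A x_α^δ − A x†‖² ≤ C (α Ψ(α) + δ²). -/
/-!
Minimality of `x_α^δ` against `x†` gives `‖A x_α^δ - y^δ‖² / 2 ≤ δ² / 2 + α (J x† - J x_α^δ)`,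
and the variational inequality bounds the last term by `α Φ(t)`, `t = ‖A x_α^δ - A x†‖`.
By definition of `Ψ`, `Φ(t) ≤ Ψ(α) + t² / (2α)`, but the constant `1/2` in front of `t²` is too
large to absorb into the left-hand side. Concavity with `Φ 0 = 0` gives `Φ(t) ≤ 4 Φ(t/4)`, which
improves the bound to `α Φ(t) ≤ 4 α Ψ(α) + t² / 8`; since `t ≤ ‖A x_α^δ - y^δ‖ + δ`, the quadratic
term can now be absorbed and both rates follow by elementary algebra.
-/

lemma ConcaveOn.mul_le_apply_smul {E : Type*} [AddCommGroup E] [Module ℝ E] {s : Set E}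
    {f : E → ℝ} (hf : ConcaveOn ℝ s f) (h0 : (0 : E) ∈ s) (hf0 : f 0 = 0) {x : E} (hx : x ∈ s)
    {a : ℝ} (ha0 : 0 ≤ a) (ha1 : a ≤ 1) : a * f x ≤ f (a • x) := by
  have h := hf.2 h0 hx (sub_nonneg.2 ha1) ha0 (sub_add_cancel 1 a)
  simpa only [smul_zero, zero_add, hf0, smul_eq_mul, mul_zero] using h

section SupBound

variable {Φ : ℝ → ℝ} {α : ℝ}

lemma le_sSup_add_sq_div (hbdd : BddAbove ((fun t => Φ t - t ^ 2 / (2 * α)) '' Set.Ici 0))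
    {t : ℝ} (ht : 0 ≤ t) :
    Φ t ≤ sSup ((fun t => Φ t - t ^ 2 / (2 * α)) '' Set.Ici 0) + t ^ 2 / (2 * α) := by
  have h := le_csSup hbdd (Set.mem_image_of_mem _ (Set.mem_Ici.2 ht))
  linarith

lemma sSup_sub_sq_div_nonneg (hbdd : BddAbove ((fun t => Φ t - t ^ 2 / (2 * α)) '' Set.Ici 0))
    (hΦ0 : Φ 0 = 0) : 0 ≤ sSup ((fun t => Φ t - t ^ 2 / (2 * α)) '' Set.Ici 0) := by
  simpa [hΦ0] using le_sSup_add_sq_div hbdd le_rfl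

end SupBound

lemma half_sq_add_le_of_isMinimizer {X H : Type*} [NormedAddCommGroup H] {A : X → H}
    {J : X → ℝ} {xdag xad : X} {yδ : H} {α δ : ℝ} (hyδ : ‖A xdag - yδ‖ ≤ δ)
    (hmin : ∀ x, (1 / 2) * ‖A xad - yδ‖ ^ 2 + α * J xad ≤ (1 / 2) * ‖A x - yδ‖ ^ 2 + α * J x) :
    (1 / 2) * ‖A xad - yδ‖ ^ 2 + α * J xad ≤ (1 / 2) * δ ^ 2 + α * J xdag := by
  have hsq : ‖A xdag - yδ‖ ^ 2 ≤ δ ^ 2 := pow_le_pow_left₀ (norm_nonneg _) hyδ 2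
  linarith [hmin xdag]

/-- Here `s = ‖A x_α^δ - y^δ‖`, `t = ‖A x_α^δ - A x†‖` and `j = J x† - J x_α^δ`. -/
lemma abs_le_and_sq_le_of_tikhonov_bounds {α Ψ s t δ j : ℝ} (hα : 0 < α) (hΨ : 0 ≤ Ψ)
    (hmin : s ^ 2 / 2 ≤ δ ^ 2 / 2 + α * j) (hvar : α * j ≤ 4 * (α * Ψ) + t ^ 2 / 8)
    (ht : 0 ≤ t) (htri : t ≤ s + δ) :
    |j| ≤ 32 * (Ψ + δ ^ 2 / α) ∧ t ^ 2 ≤ 32 * (α * Ψ + δ ^ 2) := by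
  have hαΨ : 0 ≤ α * Ψ := mul_nonneg hα.le hΨ
  have hδ2 : 0 ≤ δ ^ 2 := sq_nonneg δ
  have ht2 : t ^ 2 ≤ 2 * s ^ 2 + 2 * δ ^ 2 := by nlinarith [sq_nonneg (s - δ)]
  have hs2 : s ^ 2 ≤ 16 * (α * Ψ) + 3 * δ ^ 2 := by linarith
  have hαj : |α * j| ≤ 32 * (α * Ψ + δ ^ 2) := abs_le.2 ⟨by linarith [sq_nonneg s], by linarith⟩
  have hrate : 32 * (Ψ + δ ^ 2 / α) = 32 * (α * Ψ + δ ^ 2) / α := by field_simp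
  rw [abs_mul, abs_of_pos hα] at hαj
  exact ⟨by rw [hrate, le_div_iff₀ hα]; linarith, by linarith⟩

theorem stmt12_general {X H : Type*} [NormedAddCommGroup X] [NormedSpace ℝ X]
    [NormedAddCommGroup H] [InnerProductSpace ℝ H]
    (A : X →L[ℝ] H) (J : X → ℝ) (xdag : X)
    (Φ : ℝ → ℝ) (hΦconc : ConcaveOn ℝ (Set.Ici 0) Φ)
    (hΦ0 : Φ 0 = 0)
    (hvar : ∀ x : X, J xdag - J x ≤ Φ ‖A x - A xdag‖)
    (Ψ : ℝ → ℝ)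
    (hbdd : ∀ α > 0, BddAbove ((fun t => Φ t - t ^ 2 / (2 * α)) '' Set.Ici 0))
    (hΨ : ∀ α > 0, Ψ α = sSup ((fun t => Φ t - t ^ 2 / (2 * α)) '' Set.Ici 0)) :
    ∃ C > 0, ∀ α > 0, ∀ δ > 0, ∀ yδ : H, ‖A xdag - yδ‖ ≤ δ →
      ∀ xad : X,
        (∀ x, (1 / 2) * ‖A xad - yδ‖ ^ 2 + α * J xad ≤
          (1 / 2) * ‖A x - yδ‖ ^ 2 + α * J x) →
        |J xdag - J xad| ≤ C * (Ψ α + δ ^ 2 / α) ∧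
          ‖A xad - A xdag‖ ^ 2 ≤ C * (α * Ψ α + δ ^ 2) := by
  refine ⟨32, by norm_num, fun α hα δ _ yδ hyδ xad hmin => ?_⟩
  have hΨ0 : 0 ≤ Ψ α := hΨ α hα ▸ sSup_sub_sq_div_nonneg (hbdd α hα) hΦ0
  have hΦ_le : ∀ t, 0 ≤ t → α * Φ t ≤ 4 * (α * Ψ α) + t ^ 2 / 8 := by
    intro t ht
    have hquarter := hΦconc.mul_le_apply_smul Set.self_mem_Ici hΦ0 (Set.mem_Ici.2 ht)
      (a := 1 / 4) (by norm_num) (by norm_num)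
    have hsup := hΨ α hα ▸ le_sSup_add_sq_div (hbdd α hα) (t := 1 / 4 * t) (by positivity)
    rw [smul_eq_mul] at hquarter
    calc α * Φ t ≤ α * (4 * Φ (1 / 4 * t)) := by gcongr; linarith
      _ ≤ α * (4 * (Ψ α + (1 / 4 * t) ^ 2 / (2 * α))) := by gcongr
      _ = 4 * (α * Ψ α) + t ^ 2 / 8 := by field_simp; ring
  have htri : ‖A xad - A xdag‖ ≤ ‖A xad - yδ‖ + δ :=
    (norm_sub_le_norm_sub_add_norm_sub _ yδ _).trans (by rw [norm_sub_rev yδ]; gcongr)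
  exact abs_le_and_sq_le_of_tikhonov_bounds hα hΨ0
    (by linarith [half_sq_add_le_of_isMinimizer hyδ hmin])
    ((mul_le_mul_of_nonneg_left (hvar xad) hα.le).trans (hΦ_le _ (norm_nonneg _)))
    (norm_nonneg _) htri

/-- Theorem 2, part 2 (strict metric rate): under the variational inequality with a
concave index function `Φ` and with `Ψ(α) = sup_{t ≥ 0} (Φ(t) − t²/(2α))` (assumed
finite), there is a constant `C > 0` such that for all `α, δ > 0` and every minimizer
`x_α^δ` of the noisy Tikhonov functional,
`|J(x†) − J(x_α^δ)| ≤ C (Ψ(α) + δ²/α)` and `‖A x_α^δ − A x†‖² ≤ C (α Ψ(α) + δ²)`. -/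
theorem stmt12 {X H : Type*} [NormedAddCommGroup X] [NormedSpace ℝ X] [CompleteSpace X]
    [NormedAddCommGroup H] [InnerProductSpace ℝ H] [CompleteSpace H]
    (A : X →L[ℝ] H) (J : X → ℝ) (hJ : ConvexOn ℝ Set.univ J) (xdag : X)
    (Φ : ℝ → ℝ) (hΦconc : ConcaveOn ℝ (Set.Ici 0) Φ)
    (hΦmono : MonotoneOn Φ (Set.Ici 0)) (hΦnn : ∀ t ≥ 0, 0 ≤ Φ t) (hΦ0 : Φ 0 = 0)
    (hΦcont0 : ContinuousWithinAt Φ (Set.Ici 0) 0)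
    (hvar : ∀ x : X, J xdag - J x ≤ Φ ‖A x - A xdag‖)
    (Ψ : ℝ → ℝ)
    (hbdd : ∀ α > 0, BddAbove ((fun t => Φ t - t ^ 2 / (2 * α)) '' Set.Ici 0))
    (hΨ : ∀ α > 0, Ψ α = sSup ((fun t => Φ t - t ^ 2 / (2 * α)) '' Set.Ici 0)) :
    ∃ C > 0, ∀ α > 0, ∀ δ > 0, ∀ yδ : H, ‖A xdag - yδ‖ ≤ δ →
      ∀ xad : X,
        (∀ x, (1 / 2) * ‖A xad - yδ‖ ^ 2 + α * J xad ≤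
          (1 / 2) * ‖A x - yδ‖ ^ 2 + α * J x) →
        |J xdag - J xad| ≤ C * (Ψ α + δ ^ 2 / α) ∧
          ‖A xad - A xdag‖ ^ 2 ≤ C * (α * Ψ α + δ ^ 2) :=
  stmt12_general A J xdag Φ hΦconc hΦ0 hvar Ψ hbdd hΨ
end

section
/- Convergence rate under conditional stability (Cheng–Yamamoto rate via the KL approach): let θ ∈ (0,2) and C > 0 with √(1 + ‖x†‖²_Z) ≤ C, and assume the conditional stability estimate ‖ι f₁ − ι f₂‖_X ≤ ‖A f₁ − A f₂‖_Y^θ for all f₁, f₂ ∈ Z with ‖f₁‖_Z ≤ C and ‖f₂‖_Z ≤ C. For δ > 0 let y^δ ∈ Y with ‖y − y^δ‖ ≤ δ, choose α := δ², and let x_α^δ be a minimizer over Z of (1/2)‖A x − y^δ‖²_Y + (α/2)‖x‖²_Z. Then ‖ι x_α^δ − ι x†‖_X ≤ ((1 + √(1 + ‖x†‖²_Z)) δ)^θ; in particular ‖ι x_α^δ − ι x†‖_X = O(δ^θ). -/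
/-!
Comparing the Tikhonov functional at its minimizer `x_α^δ` with its value at `x†`, where the
residual is at most `δ`, gives `‖A x_α^δ - y^δ‖² + α ‖x_α^δ‖² ≤ δ² + α ‖x†‖²`. For `α = δ²`
both `‖x_α^δ‖ ≤ √(1 + ‖x†‖²)` and `‖A x_α^δ - y^δ‖ ≤ √(1 + ‖x†‖²) δ` follow, so `x_α^δ` and `x†`
lie in the ball where conditional stability holds and `‖A x_α^δ - A x†‖ ≤ (1 + √(1 + ‖x†‖²)) δ`.
-/

section Tikhonov

variable {Z Y : Type*} [SeminormedAddCommGroup Z] [SeminormedAddCommGroup Y]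

noncomputable def tikhonovFunctional (A : Z → Y) (yδ : Y) (α : ℝ) (x : Z) : ℝ :=
  1 / 2 * ‖A x - yδ‖ ^ 2 + α / 2 * ‖x‖ ^ 2

variable {A : Z → Y} {yδ : Y} {x xdag : Z} {δ : ℝ}

theorem residual_sq_add_le_of_tikhonovFunctional_le {α : ℝ}
    (hmin : tikhonovFunctional A yδ α x ≤ tikhonovFunctional A yδ α xdag)
    (hnoise : ‖A xdag - yδ‖ ≤ δ) :
    ‖A x - yδ‖ ^ 2 + α * ‖x‖ ^ 2 ≤ δ ^ 2 + α * ‖xdag‖ ^ 2 := by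
  have hnoise_sq : ‖A xdag - yδ‖ ^ 2 ≤ δ ^ 2 := pow_le_pow_left₀ (norm_nonneg _) hnoise 2
  unfold tikhonovFunctional at hmin
  linarith

theorem norm_le_sqrt_of_tikhonovFunctional_le (hδ : 0 < δ)
    (hmin : tikhonovFunctional A yδ (δ ^ 2) x ≤ tikhonovFunctional A yδ (δ ^ 2) xdag)
    (hnoise : ‖A xdag - yδ‖ ≤ δ) :
    ‖x‖ ≤ √(1 + ‖xdag‖ ^ 2) := by
  have h := residual_sq_add_le_of_tikhonovFunctional_le hmin hnoise
  have hscaled : δ ^ 2 * ‖x‖ ^ 2 ≤ δ ^ 2 * (1 + ‖xdag‖ ^ 2) := by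
    nlinarith [sq_nonneg ‖A x - yδ‖]
  exact Real.le_sqrt_of_sq_le (le_of_mul_le_mul_left hscaled (by positivity))

theorem residual_le_of_tikhonovFunctional_le (hδ : 0 < δ)
    (hmin : tikhonovFunctional A yδ (δ ^ 2) x ≤ tikhonovFunctional A yδ (δ ^ 2) xdag)
    (hnoise : ‖A xdag - yδ‖ ≤ δ) :
    ‖A x - yδ‖ ≤ √(1 + ‖xdag‖ ^ 2) * δ := by
  have h := residual_sq_add_le_of_tikhonovFunctional_le hmin hnoise
  have hsq : ‖A x - yδ‖ ^ 2 ≤ (1 + ‖xdag‖ ^ 2) * δ ^ 2 := by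
    nlinarith [mul_nonneg (sq_nonneg δ) (sq_nonneg ‖x‖)]
  calc ‖A x - yδ‖ ≤ √((1 + ‖xdag‖ ^ 2) * δ ^ 2) := Real.le_sqrt_of_sq_le hsq
    _ = √(1 + ‖xdag‖ ^ 2) * δ := by rw [Real.sqrt_mul (by positivity), Real.sqrt_sq hδ.le]

theorem norm_sub_le_of_tikhonovFunctional_le (hδ : 0 < δ)
    (hmin : tikhonovFunctional A yδ (δ ^ 2) x ≤ tikhonovFunctional A yδ (δ ^ 2) xdag)
    (hnoise : ‖A xdag - yδ‖ ≤ δ) :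
    ‖A x - A xdag‖ ≤ (1 + √(1 + ‖xdag‖ ^ 2)) * δ := by
  calc ‖A x - A xdag‖ ≤ ‖A x - yδ‖ + ‖yδ - A xdag‖ := norm_sub_le_norm_sub_add_norm_sub _ _ _
    _ ≤ √(1 + ‖xdag‖ ^ 2) * δ + δ := by
      rw [norm_sub_rev yδ]
      exact add_le_add (residual_le_of_tikhonovFunctional_le hδ hmin hnoise) hnoise
    _ = (1 + √(1 + ‖xdag‖ ^ 2)) * δ := by ring

end Tikhonov

theorem stmt18_general {Z Y X : Type*} [NormedAddCommGroup Z] [InnerProductSpace ℝ Z]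
    [NormedAddCommGroup Y] [InnerProductSpace ℝ Y]
    [NormedAddCommGroup X] [NormedSpace ℝ X]
    (ι : Z →L[ℝ] X)
    (A : Z →L[ℝ] Y) (xdag : Z)
    (θ C : ℝ) (hθ : θ ∈ Set.Ioo (0 : ℝ) 2)
    (hCge : Real.sqrt (1 + ‖xdag‖ ^ 2) ≤ C)
    (hstab : ∀ f₁ f₂ : Z, ‖f₁‖ ≤ C → ‖f₂‖ ≤ C → ‖ι f₁ - ι f₂‖ ≤ ‖A f₁ - A f₂‖ ^ θ)
    (δ : ℝ) (hδ : 0 < δ) (yδ : Y) (hnoise : ‖A xdag - yδ‖ ≤ δ)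
    (xad : Z)
    (hmin : ∀ x : Z, (1 / 2) * ‖A xad - yδ‖ ^ 2 + (δ ^ 2 / 2) * ‖xad‖ ^ 2 ≤
      (1 / 2) * ‖A x - yδ‖ ^ 2 + (δ ^ 2 / 2) * ‖x‖ ^ 2) :
    ‖ι xad - ι xdag‖ ≤ ((1 + Real.sqrt (1 + ‖xdag‖ ^ 2)) * δ) ^ θ := by
  have hmin' : tikhonovFunctional A yδ (δ ^ 2) xad ≤ tikhonovFunctional A yδ (δ ^ 2) xdag :=
    hmin xdag
  have hxad : ‖xad‖ ≤ C := (norm_le_sqrt_of_tikhonovFunctional_le hδ hmin' hnoise).trans hCge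
  have hxdag : ‖xdag‖ ≤ C :=
    (Real.le_sqrt_of_sq_le (le_add_of_nonneg_left zero_le_one)).trans hCge
  calc ‖ι xad - ι xdag‖ ≤ ‖A xad - A xdag‖ ^ θ := hstab xad xdag hxad hxdag
    _ ≤ ((1 + Real.sqrt (1 + ‖xdag‖ ^ 2)) * δ) ^ θ :=
      Real.rpow_le_rpow (norm_nonneg _)
        (norm_sub_le_of_tikhonovFunctional_le hδ hmin' hnoise) hθ.1.le

/-- Cheng–Yamamoto convergence rate under conditional stability via the KL approach: with
the conditional stability estimate `‖ι f₁ − ι f₂‖_X ≤ ‖A f₁ − A f₂‖_Y^θ` on the ball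
`‖·‖_Z ≤ C` where `√(1 + ‖x†‖²) ≤ C`, noise level `δ > 0`, the choice `α = δ²` and `x_α^δ`
a minimizer of `(1/2)‖A x − y^δ‖² + (α/2)‖x‖²`, one has
`‖ι x_α^δ − ι x†‖_X ≤ ((1 + √(1 + ‖x†‖²)) δ)^θ`, in particular a rate `O(δ^θ)`. -/
theorem stmt18 {Z Y X : Type*} [NormedAddCommGroup Z] [InnerProductSpace ℝ Z]
    [CompleteSpace Z] [NormedAddCommGroup Y] [InnerProductSpace ℝ Y] [CompleteSpace Y]
    [NormedAddCommGroup X] [NormedSpace ℝ X] [CompleteSpace X]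
    (ι : Z →L[ℝ] X) (hι : Function.Injective ι)
    (A : Z →L[ℝ] Y) (xdag : Z)
    (θ C : ℝ) (hθ : θ ∈ Set.Ioo (0 : ℝ) 2) (hC : 0 < C)
    (hCge : Real.sqrt (1 + ‖xdag‖ ^ 2) ≤ C)
    (hstab : ∀ f₁ f₂ : Z, ‖f₁‖ ≤ C → ‖f₂‖ ≤ C → ‖ι f₁ - ι f₂‖ ≤ ‖A f₁ - A f₂‖ ^ θ)
    (δ : ℝ) (hδ : 0 < δ) (yδ : Y) (hnoise : ‖A xdag - yδ‖ ≤ δ)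
    (xad : Z)
    (hmin : ∀ x : Z, (1 / 2) * ‖A xad - yδ‖ ^ 2 + (δ ^ 2 / 2) * ‖xad‖ ^ 2 ≤
      (1 / 2) * ‖A x - yδ‖ ^ 2 + (δ ^ 2 / 2) * ‖x‖ ^ 2) :
    ‖ι xad - ι xdag‖ ≤ ((1 + Real.sqrt (1 + ‖xdag‖ ^ 2)) * δ) ^ θ :=
  stmt18_general ι A xdag θ C hθ hCge hstab δ hδ yδ hnoise xad hmin
end
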